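/- If h∞ is a weak subsequential limit of T^n h₀ and T is weak-to-weak continuous (being bounded linear), then T h∞ is also a weak subsequential limit of T^n h₀; if additionally all weak subsequential limits have the same norm V and ‖T a‖ = ‖a‖ implies a = α f, then h∞ = α f with α = (∫ h₀)/(∫ f). -/

import Mathlib

open MeasureTheory Filter

noncomputable def wpair {Q : Type*} [MeasurableSpace Q] (μ : Measure Q) (f a b : Q → ℝ) : ℝ :=
  ∫ x, a x * b x / f x ∂μ

noncomputable def wnormPow {Q : Type*} [MeasurableSpace Q] (μ : Measure Q) (f : Q → ℝ)
    (q : ℝ) (h : Q → ℝ) : ℝ :=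
  ∫ x, |h x / f x| ^ q * f x ∂μ

def memWL {Q : Type*} [MeasurableSpace Q] (μ : Measure Q) (f : Q → ℝ) (q : ℝ)
    (h : Q → ℝ) : Prop :=
  Measurable h ∧ Integrable (fun x => |h x / f x| ^ q * f x) μ

/-!
Weak convergence is tested in particular against (a measurable version of) the weight `f`
itself, which lies in every `L^p(f)`; pairing with `f` is integration, so mass preservation
passes to weak limits and `∫ h∞ = ∫ h₀`. The shifted subsequence `T^(m n + 1) h₀` converges
weakly to `T h∞`, so `h∞` and `T h∞` are both weak limits and have the same norm; the equality
case then gives `h∞ = α f`, and the mass identity pins down `α`.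
-/

lemma Function.apply_iterate_eq_of_mapsTo {α β : Type*} {T : α → α} {s : Set α} (Φ : α → β)
    (hs : Set.MapsTo T s s) (hΦ : ∀ a ∈ s, Φ (T a) = Φ a) {a : α} (ha : a ∈ s) (n : ℕ) :
    Φ (T^[n] a) = Φ a := by
  induction n with
  | zero => rfl
  | succ n ih => rw [Function.iterate_succ_apply', hΦ _ (hs.iterate n ha), ih]

lemma Real.le_one_add_rpow {t q : ℝ} (ht : 0 ≤ t) (hq : 1 ≤ q) : t ≤ 1 + t ^ q := by
  rcases le_total t 1 with ht1 | ht1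
  · linarith [Real.rpow_nonneg ht q]
  · linarith [Real.self_le_rpow_of_one_le ht1 hq]

section WeightedLp

variable {Q : Type*} [MeasurableSpace Q] {μ : Measure Q} {f : Q → ℝ}

def WeakTendsto (μ : Measure Q) (f : Q → ℝ) (p : ℝ) (u : ℕ → Q → ℝ) (k : Q → ℝ) : Prop :=
  ∀ b, memWL μ f p b → Tendsto (fun n => wpair μ f (u n) b) atTop (nhds (wpair μ f k b))

lemma integrable_of_memWL (hf_pos : ∀ x, 0 < f x) (hf_int : Integrable f μ) {q : ℝ}
    (hq : 1 ≤ q) {a : Q → ℝ} (ha : memWL μ f q a) : Integrable a μ := by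
  refine (hf_int.add ha.2).mono' ha.1.aestronglyMeasurable (Eventually.of_forall fun x => ?_)
  have hfx := hf_pos x
  rw [Real.norm_eq_abs, Pi.add_apply]
  calc |a x| = |a x / f x| * f x := by rw [abs_div, abs_of_pos hfx, div_mul_cancel₀ _ hfx.ne']
    _ ≤ (1 + |a x / f x| ^ q) * f x :=
      mul_le_mul_of_nonneg_right (Real.le_one_add_rpow (abs_nonneg _) hq) hfx.le
    _ = f x + |a x / f x| ^ q * f x := by ring

lemma memWL_of_ae_eq_weight (hf_pos : ∀ x, 0 < f x) (hf_int : Integrable f μ) (p : ℝ)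
    {g : Q → ℝ} (hg_meas : Measurable g) (hg : g =ᵐ[μ] f) : memWL μ f p g := by
  refine ⟨hg_meas, hf_int.congr ?_⟩
  filter_upwards [hg] with x hx
  rw [hx, div_self (hf_pos x).ne', abs_one, Real.one_rpow, one_mul]

lemma wpair_of_ae_eq_weight (hf_pos : ∀ x, 0 < f x) {g : Q → ℝ} (hg : g =ᵐ[μ] f)
    (u : Q → ℝ) : wpair μ f u g = ∫ x, u x ∂μ := by
  refine integral_congr_ae ?_
  filter_upwards [hg] with x hx
  rw [hx, mul_div_assoc, div_self (hf_pos x).ne', mul_one]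

lemma integral_eq_of_weakTendsto (hf_pos : ∀ x, 0 < f x) (hf_int : Integrable f μ) {p : ℝ}
    {u : ℕ → Q → ℝ} {k : Q → ℝ} (hu : WeakTendsto μ f p u k) {c : ℝ}
    (hc : ∀ n, ∫ x, u n x ∂μ = c) : ∫ x, k x ∂μ = c := by
  obtain ⟨g, hg_sm, hg⟩ := hf_int.1
  have hlim := hu g (memWL_of_ae_eq_weight hf_pos hf_int p hg_sm.measurable hg.symm)
  simp only [wpair_of_ae_eq_weight hf_pos hg.symm, hc] at hlim
  exact tendsto_nhds_unique hlim tendsto_const_nhds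

/-- When `∫ f = 0` the positivity of `f` forces `μ = 0`, so the junk value `∫ h / 0 = 0`
is harmless. -/
lemma ae_eq_integral_div_mul_of_ae_eq_const_mul (hf_pos : ∀ x, 0 < f x)
    (hf_int : Integrable f μ) {h : Q → ℝ} {α : ℝ} (hα : h =ᵐ[μ] fun x => α * f x) :
    h =ᵐ[μ] fun x => ((∫ x, h x ∂μ) / (∫ x, f x ∂μ)) * f x := by
  by_cases hf0 : ∫ x, f x ∂μ = 0
  · have hf_ae : f =ᵐ[μ] 0 :=
      (integral_eq_zero_iff_of_nonneg (fun x => (hf_pos x).le) hf_int).mp hf0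
    filter_upwards [hf_ae] with x hx
    exact absurd hx (hf_pos x).ne'
  · rwa [integral_congr_ae hα, integral_const_mul, mul_div_cancel_right₀ _ hf0]

end WeightedLp

theorem hmc_weak_limit_is_fixed_ray_general
    {Q : Type*} [MeasurableSpace Q] (μ : Measure Q)
    (f : Q → ℝ) (hf_pos : ∀ x, 0 < f x) (hf_int : Integrable f μ)
    (q p : ℝ) (hq : 2 ≤ q)
    (T : (Q → ℝ) → (Q → ℝ))
    (hT_mapsLq : ∀ a, memWL μ f q a → memWL μ f q (T a))
    -- weak-to-weak sequential continuity of the bounded linear operator `T`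
    (hT_weak_cont : ∀ (u : ℕ → (Q → ℝ)) (k : Q → ℝ),
      (∀ n, memWL μ f q (u n)) → memWL μ f q k →
      (∀ b, memWL μ f p b →
        Tendsto (fun n => wpair μ f (u n) b) atTop (nhds (wpair μ f k b))) →
      ∀ b, memWL μ f p b →
        Tendsto (fun n => wpair μ f (T (u n)) b) atTop (nhds (wpair μ f (T k) b)))
    (hT_mass : ∀ a, memWL μ f q a → Integrable a μ → ∫ x, T a x ∂μ = ∫ x, a x ∂μ)
    (h₀ : Q → ℝ) (h₀_mem : memWL μ f q h₀)
    (hinf : Q → ℝ) (hinf_mem : memWL μ f q hinf)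
    (m : ℕ → ℕ) (hm : StrictMono m)
    (h_weak : ∀ b, memWL μ f p b →
      Tendsto (fun n => wpair μ f (T^[m n] h₀) b) atTop (nhds (wpair μ f hinf b))) :
    ((∃ (m' : ℕ → ℕ), StrictMono m' ∧
      ∀ b, memWL μ f p b →
        Tendsto (fun n => wpair μ f (T^[m' n] h₀) b) atTop (nhds (wpair μ f (T hinf) b))) ∧
     (∀ V : ℝ,
      (∀ (m'' : ℕ → ℕ), StrictMono m'' → ∀ k, memWL μ f q k →
        (∀ b, memWL μ f p b →
          Tendsto (fun n => wpair μ f (T^[m'' n] h₀) b) atTop (nhds (wpair μ f k b))) →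
        wnormPow μ f q k = V) →
      (∀ a, memWL μ f q a → wnormPow μ f q (T a) = wnormPow μ f q a →
        ∃ α : ℝ, a =ᵐ[μ] fun x => α * f x) →
      hinf =ᵐ[μ] fun x => ((∫ x, h₀ x ∂μ) / (∫ x, f x ∂μ)) * f x)) := by
  have hT_maps : Set.MapsTo T {a | memWL μ f q a} {a | memWL μ f q a} := hT_mapsLq
  have hiter_mem (n : ℕ) : memWL μ f q (T^[n] h₀) := hT_maps.iterate n h₀_mem
  have hshift_mono : StrictMono (fun n => m n + 1) := fun _ _ h => Nat.succ_lt_succ (hm h)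
  have hshift : WeakTendsto μ f p (fun n => T^[m n + 1] h₀) (T hinf) := fun b hb => by
    simpa only [Function.iterate_succ_apply'] using
      hT_weak_cont _ hinf (fun n => hiter_mem (m n)) hinf_mem h_weak b hb
  refine ⟨⟨_, hshift_mono, hshift⟩, fun V hV hT_eq => ?_⟩
  have hmass (n : ℕ) : ∫ x, T^[n] h₀ x ∂μ = ∫ x, h₀ x ∂μ :=
    Function.apply_iterate_eq_of_mapsTo (fun a => ∫ x, a x ∂μ) hT_maps
      (fun a ha => hT_mass a ha (integrable_of_memWL hf_pos hf_int (one_le_two.trans hq) ha))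
      h₀_mem n
  have hinf_mass : ∫ x, hinf x ∂μ = ∫ x, h₀ x ∂μ :=
    integral_eq_of_weakTendsto hf_pos hf_int h_weak fun n => hmass (m n)
  have hnorm : wnormPow μ f q (T hinf) = wnormPow μ f q hinf :=
    (hV _ hshift_mono _ (hT_mapsLq hinf hinf_mem) hshift).trans
      (hV m hm hinf hinf_mem h_weak).symm
  obtain ⟨α, hα⟩ := hT_eq hinf hinf_mem hnorm
  simpa only [hinf_mass] using ae_eq_integral_div_mul_of_ae_eq_const_mul hf_pos hf_int hα

/-- If `h∞` is a weak subsequential limit of `T^n h₀` and `T` is weak-to-weak continuous,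
then `T h∞` is also a weak subsequential limit of `T^n h₀`; if in addition every weak
subsequential limit has the same norm `V` and the equality case `‖T a‖ = ‖a‖` forces
`a = α f`, then `h∞ = α f` a.e. with `α = (∫ h₀)/(∫ f)`. -/
theorem hmc_weak_limit_is_fixed_ray
    {Q : Type*} [MeasurableSpace Q] (μ : Measure Q)
    (f : Q → ℝ) (hf_pos : ∀ x, 0 < f x) (hf_int : Integrable f μ)
    (q p : ℝ) (hq : 2 ≤ q) (hp : 1 < p) (hqp : 1 / q + 1 / p = 1)
    (T : (Q → ℝ) → (Q → ℝ))
    (hT_mapsLq : ∀ a, memWL μ f q a → memWL μ f q (T a))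
    -- weak-to-weak sequential continuity of the bounded linear operator `T`
    (hT_weak_cont : ∀ (u : ℕ → (Q → ℝ)) (k : Q → ℝ),
      (∀ n, memWL μ f q (u n)) → memWL μ f q k →
      (∀ b, memWL μ f p b →
        Tendsto (fun n => wpair μ f (u n) b) atTop (nhds (wpair μ f k b))) →
      ∀ b, memWL μ f p b →
        Tendsto (fun n => wpair μ f (T (u n)) b) atTop (nhds (wpair μ f (T k) b)))
    (hT_mass : ∀ a, memWL μ f q a → Integrable a μ → ∫ x, T a x ∂μ = ∫ x, a x ∂μ)
    (h₀ : Q → ℝ) (h₀_mem : memWL μ f q h₀) (h₀_int : Integrable h₀ μ)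
    (hinf : Q → ℝ) (hinf_mem : memWL μ f q hinf)
    (m : ℕ → ℕ) (hm : StrictMono m)
    (h_weak : ∀ b, memWL μ f p b →
      Tendsto (fun n => wpair μ f (T^[m n] h₀) b) atTop (nhds (wpair μ f hinf b))) :
    ((∃ (m' : ℕ → ℕ), StrictMono m' ∧
      ∀ b, memWL μ f p b →
        Tendsto (fun n => wpair μ f (T^[m' n] h₀) b) atTop (nhds (wpair μ f (T hinf) b))) ∧
     (∀ V : ℝ,
      (∀ (m'' : ℕ → ℕ), StrictMono m'' → ∀ k, memWL μ f q k →
        (∀ b, memWL μ f p b →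
          Tendsto (fun n => wpair μ f (T^[m'' n] h₀) b) atTop (nhds (wpair μ f k b))) →
        wnormPow μ f q k = V) →
      (∀ a, memWL μ f q a → wnormPow μ f q (T a) = wnormPow μ f q a →
        ∃ α : ℝ, a =ᵐ[μ] fun x => α * f x) →
      hinf =ᵐ[μ] fun x => ((∫ x, h₀ x ∂μ) / (∫ x, f x ∂μ)) * f x)) :=
  hmc_weak_limit_is_fixed_ray_general μ f hf_pos hf_int q p hq T hT_mapsLq hT_weak_cont hT_mass h₀
    h₀_mem hinf hinf_mem m hm h_weak
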